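/- arXiv:2204.09547 — 2 statements merged into one kernel-verified Lean document; each statement's English description precedes it below -/
import Mathlib

section
/- The dependent optics construction yields a category. Precisely: the composition formula ⟨l₂|r₂⟩ ∘ ⟨l₁|r₁⟩ = ⟨(θ_{f,g})_Z ∘ f⋆L(l₂) ∘ l₁ | r₁ ∘ f⋆R(r₂) ∘ (θ'⁻¹_{f,g})_{Z'}⟩ is extranatural in the representatives f and g, hence descends to a well-defined composition on equivalence classes, and with the identities ⟨(θ_A)_X | (θ'_A⁻¹)_{X'}⟩ this composition is unital and associative, so that Optic_{L,R} is a category. -/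
open CategoryTheory CategoryTheory.Bicategory

universe w₂ v₂ u₂ w v u

namespace DependentOptics

variable (B : Type u) [Bicategory.{w, v} B]

/-- A `B`-indexed category: the data of a pseudofunctor `Bᵒᵖ ⥤ Cat`, recorded contravariantly
on `B`, together with its coherence isomorphisms and coherence laws. -/
structure BIndexedCat where
  obj : B → Cat.{v₂, u₂}
  map : ∀ {b c : B}, (b ⟶ c) → ((obj c) ⥤ (obj b))
  map₂ : ∀ {b c : B} {f g : b ⟶ c}, (f ⟶ g) → (map f ⟶ map g)
  map₂_id : ∀ {b c : B} (f : b ⟶ c), map₂ (𝟙 f) = 𝟙 (map f)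
  map₂_comp : ∀ {b c : B} {f g h : b ⟶ c} (m : f ⟶ g) (n : g ⟶ h),
      map₂ (m ≫ n) = map₂ m ≫ map₂ n
  mapId : ∀ (b : B), 𝟭 (obj b) ≅ map (𝟙 b)
  mapComp : ∀ {b c d : B} (f : b ⟶ c) (g : c ⟶ d), map g ⋙ map f ≅ map (f ≫ g)
  mapComp_natural_left :
    ∀ {b c d : B} {f f' : b ⟶ c} (m : f ⟶ f') (g : c ⟶ d) (Y : obj d),
      (map₂ m).app ((map g).obj Y) ≫ (mapComp f' g).hom.app Y
        = (mapComp f g).hom.app Y ≫ (map₂ (m ▷ g)).app Y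
  mapComp_natural_right :
    ∀ {b c d : B} (f : b ⟶ c) {g g' : c ⟶ d} (n : g ⟶ g') (Y : obj d),
      (map f).map ((map₂ n).app Y) ≫ (mapComp f g').hom.app Y
        = (mapComp f g).hom.app Y ≫ (map₂ (f ◁ n)).app Y
  unit_left : ∀ {b c : B} (f : b ⟶ c) (Y : obj c),
      (mapId b).hom.app ((map f).obj Y) ≫ (mapComp (𝟙 b) f).hom.app Y
        ≫ (map₂ (λ_ f).hom).app Y = 𝟙 ((map f).obj Y)
  unit_right : ∀ {b c : B} (f : b ⟶ c) (Y : obj c),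
      (map f).map ((mapId c).hom.app Y) ≫ (mapComp f (𝟙 c)).hom.app Y
        ≫ (map₂ (ρ_ f).hom).app Y = 𝟙 ((map f).obj Y)
  assoc_coh : ∀ {a b c d : B} (f : a ⟶ b) (g : b ⟶ c) (h : c ⟶ d) (W : obj d),
      (mapComp f g).hom.app ((map h).obj W) ≫ (mapComp (f ≫ g) h).hom.app W
        ≫ (map₂ (α_ f g h).hom).app W
      = (map f).map ((mapComp g h).hom.app W) ≫ (mapComp f (g ≫ h)).hom.app W

variable {B}
variable (L R : BIndexedCat.{v₂, u₂} B)

/-- Objects of the category of dependent optics: triples `(X, X')ᴬ`. -/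
structure OpticObj where
  base : B
  left : L.obj base
  right : R.obj base

variable {L R}

/-- A representative of a dependent optic: a 1-morphism `f` together with
`l : X ⟶ f⋆L Y` and `r : f⋆R Y' ⟶ X'`. -/
structure OpticHomRaw (S T : OpticObj L R) where
  rep : S.base ⟶ T.base
  fwd : S.left ⟶ (L.map rep).obj T.left
  bwd : (R.map rep).obj T.right ⟶ S.right

/-- The coend relation: `(L(m)_Y ∘ l, r) ∼ (l, r ∘ R(m)_{Y'})` for 2-morphisms `m : f ⟶ g`. -/
inductive OpticRel (S T : OpticObj L R) : OpticHomRaw S T → OpticHomRaw S T → Prop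
  | mk {f g : S.base ⟶ T.base} (m : f ⟶ g)
      (l : S.left ⟶ (L.map f).obj T.left)
      (r : (R.map g).obj T.right ⟶ S.right) :
      OpticRel S T ⟨g, l ≫ (L.map₂ m).app T.left, r⟩
                   ⟨f, l, (R.map₂ m).app T.right ≫ r⟩

/-- Morphisms of dependent optics: equivalence classes of representatives, i.e. elements of
the coend `∫^f Hom(X, f⋆L Y) × Hom(f⋆R Y', X')`. -/
def OpticHom (S T : OpticObj L R) := Quot (OpticRel S T)

/-- The identity optic `⟨(θ_A)_X ∣ (θ'_A⁻¹)_{X'}⟩`. -/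
def rawId (S : OpticObj L R) : OpticHomRaw S S :=
  ⟨𝟙 S.base, (L.mapId S.base).hom.app S.left, (R.mapId S.base).inv.app S.right⟩

/-- Composition of representatives,
`⟨l₂∣r₂⟩ ∘ ⟨l₁∣r₁⟩ = ⟨(θ_{f,g})_Z ∘ f⋆L(l₂) ∘ l₁ ∣ r₁ ∘ f⋆R(r₂) ∘ (θ'⁻¹_{f,g})_{Z'}⟩`. -/
def rawComp {S T U : OpticObj L R} (p : OpticHomRaw S T) (q : OpticHomRaw T U) :
    OpticHomRaw S U :=
  ⟨p.rep ≫ q.rep,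
   p.fwd ≫ (L.map p.rep).map q.fwd ≫ (L.mapComp p.rep q.rep).hom.app U.left,
   (R.mapComp p.rep q.rep).inv.app U.right ≫ (R.map p.rep).map q.bwd ≫ p.bwd⟩


section Helpers

variable (C : BIndexedCat.{v₂, u₂} B)

/-- `map₂` of an invertible 2-cell is an isomorphism of functors. -/
def map₂Iso {b c : B} {f g : b ⟶ c} (m : f ≅ g) : C.map f ≅ C.map g where
  hom := C.map₂ m.hom
  inv := C.map₂ m.inv
  hom_inv_id := by rw [← C.map₂_comp, m.hom_inv_id, C.map₂_id]
  inv_hom_id := by rw [← C.map₂_comp, m.inv_hom_id, C.map₂_id]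

lemma map₂_hom_inv_app {b c : B} {f g : b ⟶ c} (m : f ≅ g) (Y : C.obj c) :
    (C.map₂ m.hom).app Y ≫ (C.map₂ m.inv).app Y = 𝟙 _ := by
  rw [← NatTrans.comp_app, ← C.map₂_comp, m.hom_inv_id, C.map₂_id, NatTrans.id_app]

lemma map₂_inv_hom_app {b c : B} {f g : b ⟶ c} (m : f ≅ g) (Y : C.obj c) :
    (C.map₂ m.inv).app Y ≫ (C.map₂ m.hom).app Y = 𝟙 _ := by
  rw [← NatTrans.comp_app, ← C.map₂_comp, m.inv_hom_id, C.map₂_id, NatTrans.id_app]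

lemma mapComp_natural_left_inv {b c d : B} {f f' : b ⟶ c} (m : f ⟶ f') (g : c ⟶ d)
    (Y : C.obj d) :
    (C.mapComp f g).inv.app Y ≫ (C.map₂ m).app ((C.map g).obj Y)
      = (C.map₂ (m ▷ g)).app Y ≫ (C.mapComp f' g).inv.app Y := by
  rw [← cancel_mono ((C.mapComp f' g).hom.app Y)]
  simp only [Category.assoc, Iso.inv_hom_id_app, Category.comp_id]
  rw [C.mapComp_natural_left m g Y]
  simp

lemma mapComp_natural_right_inv {b c d : B} (f : b ⟶ c) {g g' : c ⟶ d} (n : g ⟶ g')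
    (Y : C.obj d) :
    (C.mapComp f g).inv.app Y ≫ (C.map f).map ((C.map₂ n).app Y)
      = (C.map₂ (f ◁ n)).app Y ≫ (C.mapComp f g').inv.app Y := by
  rw [← cancel_mono ((C.mapComp f g').hom.app Y)]
  simp only [Category.assoc, Iso.inv_hom_id_app, Category.comp_id]
  rw [C.mapComp_natural_right f n Y]
  simp

lemma unit_left_inv {b c : B} (f : b ⟶ c) (Y : C.obj c) :
    (C.map₂ (λ_ f).inv).app Y ≫ (C.mapComp (𝟙 b) f).inv.app Y
      = (C.mapId b).hom.app ((C.map f).obj Y) := by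
  rw [← cancel_mono ((C.mapComp (𝟙 b) f).hom.app Y),
      ← cancel_mono ((map₂Iso C (λ_ f)).hom.app Y)]
  simp only [map₂Iso, Category.assoc, Iso.inv_hom_id_app_assoc]
  rw [map₂_inv_hom_app, C.unit_left f Y]

lemma unit_right_inv {b c : B} (f : b ⟶ c) (Y : C.obj c) :
    (C.map₂ (ρ_ f).inv).app Y ≫ (C.mapComp f (𝟙 c)).inv.app Y
      = (C.map f).map ((C.mapId c).hom.app Y) := by
  rw [← cancel_mono ((C.mapComp f (𝟙 c)).hom.app Y),
      ← cancel_mono ((map₂Iso C (ρ_ f)).hom.app Y)]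
  simp only [map₂Iso, Category.assoc, Iso.inv_hom_id_app_assoc]
  rw [map₂_inv_hom_app, C.unit_right f Y]

lemma assoc_coh_inv {a b c d : B} (f : a ⟶ b) (g : b ⟶ c) (h : c ⟶ d) (W : C.obj d) :
    (C.map₂ (α_ f g h).hom).app W ≫ (C.mapComp f (g ≫ h)).inv.app W
        ≫ (C.map f).map ((C.mapComp g h).inv.app W)
      = (C.mapComp (f ≫ g) h).inv.app W ≫ (C.mapComp f g).inv.app ((C.map h).obj W) := by
  rw [← cancel_mono ((C.mapComp f g).hom.app ((C.map h).obj W)),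
      ← cancel_mono ((C.mapComp (f ≫ g) h).hom.app W),
      ← cancel_mono ((map₂Iso C (α_ f g h)).hom.app W)]
  simp only [map₂Iso, Category.assoc, Iso.inv_hom_id_app, Category.comp_id,
    Iso.inv_hom_id_app_assoc]
  rw [C.assoc_coh f g h W]
  simp [← Functor.map_comp_assoc]

end Helpers

section MainParts

lemma comp_rel_left (S T U : OpticObj L R) (p p' : OpticHomRaw S T) (q : OpticHomRaw T U)
    (h : OpticRel S T p p') :
    Quot.mk (OpticRel S U) (rawComp p q) = Quot.mk (OpticRel S U) (rawComp p' q) := by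
  cases h with
  | @mk f g m l r =>
    have hf : (l ≫ (L.map₂ m).app T.left) ≫ (L.map g).map q.fwd
          ≫ (L.mapComp g q.rep).hom.app U.left
        = (l ≫ (L.map f).map q.fwd ≫ (L.mapComp f q.rep).hom.app U.left)
          ≫ (L.map₂ (m ▷ q.rep)).app U.left := by
      simp only [Category.assoc]
      rw [← (L.map₂ m).naturality_assoc q.fwd, L.mapComp_natural_left m q.rep U.left]
    have hb : (R.mapComp f q.rep).inv.app U.right ≫ (R.map f).map q.bwd
          ≫ ((R.map₂ m).app T.right ≫ r)
        = (R.map₂ (m ▷ q.rep)).app U.right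
          ≫ ((R.mapComp g q.rep).inv.app U.right ≫ (R.map g).map q.bwd ≫ r) := by
      rw [(R.map₂ m).naturality_assoc q.bwd,
        reassoc_of% (mapComp_natural_left_inv R m q.rep U.right)]
    show Quot.mk (OpticRel S U) ⟨g ≫ q.rep,
          (l ≫ (L.map₂ m).app T.left) ≫ (L.map g).map q.fwd
            ≫ (L.mapComp g q.rep).hom.app U.left,
          (R.mapComp g q.rep).inv.app U.right ≫ (R.map g).map q.bwd ≫ r⟩
        = Quot.mk (OpticRel S U) ⟨f ≫ q.rep,
          l ≫ (L.map f).map q.fwd ≫ (L.mapComp f q.rep).hom.app U.left,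
          (R.mapComp f q.rep).inv.app U.right ≫ (R.map f).map q.bwd
            ≫ ((R.map₂ m).app T.right ≫ r)⟩
    rw [hf, hb]
    exact Quot.sound (OpticRel.mk (m ▷ q.rep) _ _)

lemma comp_rel_right (S T U : OpticObj L R) (p : OpticHomRaw S T) (q q' : OpticHomRaw T U)
    (h : OpticRel T U q q') :
    Quot.mk (OpticRel S U) (rawComp p q) = Quot.mk (OpticRel S U) (rawComp p q') := by
  cases h with
  | @mk f g m l r =>
    have hf : p.fwd ≫ (L.map p.rep).map (l ≫ (L.map₂ m).app U.left)
          ≫ (L.mapComp p.rep g).hom.app U.left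
        = (p.fwd ≫ (L.map p.rep).map l ≫ (L.mapComp p.rep f).hom.app U.left)
          ≫ (L.map₂ (p.rep ◁ m)).app U.left := by
      simp only [Functor.map_comp, Category.assoc]
      rw [L.mapComp_natural_right p.rep m U.left]
    have hb : (R.mapComp p.rep f).inv.app U.right
          ≫ (R.map p.rep).map ((R.map₂ m).app U.right ≫ r) ≫ p.bwd
        = (R.map₂ (p.rep ◁ m)).app U.right
          ≫ ((R.mapComp p.rep g).inv.app U.right ≫ (R.map p.rep).map r ≫ p.bwd) := by
      simp only [Functor.map_comp, Category.assoc]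
      rw [reassoc_of% (mapComp_natural_right_inv R p.rep m U.right)]
    show Quot.mk (OpticRel S U) ⟨p.rep ≫ g,
          p.fwd ≫ (L.map p.rep).map (l ≫ (L.map₂ m).app U.left)
            ≫ (L.mapComp p.rep g).hom.app U.left,
          (R.mapComp p.rep g).inv.app U.right ≫ (R.map p.rep).map r ≫ p.bwd⟩
        = Quot.mk (OpticRel S U) ⟨p.rep ≫ f,
          p.fwd ≫ (L.map p.rep).map l ≫ (L.mapComp p.rep f).hom.app U.left,
          (R.mapComp p.rep f).inv.app U.right
            ≫ (R.map p.rep).map ((R.map₂ m).app U.right ≫ r) ≫ p.bwd⟩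
    rw [hf, hb]
    exact Quot.sound (OpticRel.mk (p.rep ◁ m) _ _)

lemma id_comp' (S T : OpticObj L R) (p : OpticHomRaw S T) :
    Quot.mk (OpticRel S T) (rawComp (rawId S) p) = Quot.mk (OpticRel S T) p := by
  have hf : p.fwd
      = ((L.mapId S.base).hom.app S.left ≫ (L.map (𝟙 S.base)).map p.fwd
          ≫ (L.mapComp (𝟙 S.base) p.rep).hom.app T.left)
        ≫ (L.map₂ (λ_ p.rep).hom).app T.left := by
    simp only [Category.assoc]
    rw [← (L.mapId S.base).hom.naturality_assoc p.fwd]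
    simp [L.unit_left p.rep T.left]
  have hb : p.bwd
      = (R.map₂ (λ_ p.rep).inv).app T.right
        ≫ ((R.mapComp (𝟙 S.base) p.rep).inv.app T.right
          ≫ (R.map (𝟙 S.base)).map p.bwd ≫ (R.mapId S.base).inv.app S.right) := by
    rw [reassoc_of% (unit_left_inv R p.rep T.right),
      ← (R.mapId S.base).hom.naturality_assoc p.bwd]
    simp
  have hb2 : (R.mapComp (𝟙 S.base) p.rep).inv.app T.right
        ≫ (R.map (𝟙 S.base)).map p.bwd ≫ (R.mapId S.base).inv.app S.right
      = (R.map₂ (λ_ p.rep).hom).app T.right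
        ≫ ((R.map₂ (λ_ p.rep).inv).app T.right
          ≫ ((R.mapComp (𝟙 S.base) p.rep).inv.app T.right
            ≫ (R.map (𝟙 S.base)).map p.bwd ≫ (R.mapId S.base).inv.app S.right)) := by
    rw [reassoc_of% (map₂_hom_inv_app R (λ_ p.rep) T.right)]
  show Quot.mk (OpticRel S T) ⟨𝟙 S.base ≫ p.rep,
        (L.mapId S.base).hom.app S.left ≫ (L.map (𝟙 S.base)).map p.fwd
          ≫ (L.mapComp (𝟙 S.base) p.rep).hom.app T.left,
        (R.mapComp (𝟙 S.base) p.rep).inv.app T.right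
          ≫ (R.map (𝟙 S.base)).map p.bwd ≫ (R.mapId S.base).inv.app S.right⟩
      = Quot.mk (OpticRel S T) (⟨p.rep, p.fwd, p.bwd⟩ : OpticHomRaw S T)
  rw [hb2]
  conv_rhs => rw [hf, hb]
  exact (Quot.sound (OpticRel.mk (λ_ p.rep).hom _ _)).symm

lemma comp_id' (S T : OpticObj L R) (p : OpticHomRaw S T) :
    Quot.mk (OpticRel S T) (rawComp p (rawId T)) = Quot.mk (OpticRel S T) p := by
  have hf : p.fwd
      = (p.fwd ≫ (L.map p.rep).map ((L.mapId T.base).hom.app T.left)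
          ≫ (L.mapComp p.rep (𝟙 T.base)).hom.app T.left)
        ≫ (L.map₂ (ρ_ p.rep).hom).app T.left := by
    simp only [Category.assoc]
    rw [L.unit_right p.rep T.left, Category.comp_id]
  have hb : p.bwd
      = (R.map₂ (ρ_ p.rep).inv).app T.right
        ≫ ((R.mapComp p.rep (𝟙 T.base)).inv.app T.right
          ≫ (R.map p.rep).map ((R.mapId T.base).inv.app T.right) ≫ p.bwd) := by
    rw [reassoc_of% (unit_right_inv R p.rep T.right), ← Functor.map_comp_assoc]
    simp
  have hb2 : (R.mapComp p.rep (𝟙 T.base)).inv.app T.right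
        ≫ (R.map p.rep).map ((R.mapId T.base).inv.app T.right) ≫ p.bwd
      = (R.map₂ (ρ_ p.rep).hom).app T.right
        ≫ ((R.map₂ (ρ_ p.rep).inv).app T.right
          ≫ ((R.mapComp p.rep (𝟙 T.base)).inv.app T.right
            ≫ (R.map p.rep).map ((R.mapId T.base).inv.app T.right) ≫ p.bwd)) := by
    rw [reassoc_of% (map₂_hom_inv_app R (ρ_ p.rep) T.right)]
  show Quot.mk (OpticRel S T) ⟨p.rep ≫ 𝟙 T.base,
        p.fwd ≫ (L.map p.rep).map ((L.mapId T.base).hom.app T.left)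
          ≫ (L.mapComp p.rep (𝟙 T.base)).hom.app T.left,
        (R.mapComp p.rep (𝟙 T.base)).inv.app T.right
          ≫ (R.map p.rep).map ((R.mapId T.base).inv.app T.right) ≫ p.bwd⟩
      = Quot.mk (OpticRel S T) (⟨p.rep, p.fwd, p.bwd⟩ : OpticHomRaw S T)
  rw [hb2]
  conv_rhs => rw [hf, hb]
  exact (Quot.sound (OpticRel.mk (ρ_ p.rep).hom _ _)).symm

lemma comp_assoc' (S T U V : OpticObj L R) (p : OpticHomRaw S T) (q : OpticHomRaw T U)
    (u : OpticHomRaw U V) :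
    Quot.mk (OpticRel S V) (rawComp (rawComp p q) u)
      = Quot.mk (OpticRel S V) (rawComp p (rawComp q u)) := by
  have hf : ((p.fwd ≫ (L.map p.rep).map q.fwd ≫ (L.mapComp p.rep q.rep).hom.app U.left)
          ≫ (L.map (p.rep ≫ q.rep)).map u.fwd
          ≫ (L.mapComp (p.rep ≫ q.rep) u.rep).hom.app V.left)
        ≫ (L.map₂ (α_ p.rep q.rep u.rep).hom).app V.left
      = p.fwd ≫ (L.map p.rep).map (q.fwd ≫ (L.map q.rep).map u.fwd
          ≫ (L.mapComp q.rep u.rep).hom.app V.left)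
        ≫ (L.mapComp p.rep (q.rep ≫ u.rep)).hom.app V.left := by
    simp only [Functor.map_comp, Category.assoc]
    rw [← (L.mapComp p.rep q.rep).hom.naturality_assoc u.fwd,
      L.assoc_coh p.rep q.rep u.rep V.left]
    rfl
  have hb : (R.map₂ (α_ p.rep q.rep u.rep).hom).app V.right
        ≫ ((R.mapComp p.rep (q.rep ≫ u.rep)).inv.app V.right
          ≫ (R.map p.rep).map ((R.mapComp q.rep u.rep).inv.app V.right
            ≫ (R.map q.rep).map u.bwd ≫ q.bwd) ≫ p.bwd)
      = (R.mapComp (p.rep ≫ q.rep) u.rep).inv.app V.right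
        ≫ (R.map (p.rep ≫ q.rep)).map u.bwd
        ≫ ((R.mapComp p.rep q.rep).inv.app U.right
          ≫ (R.map p.rep).map q.bwd ≫ p.bwd) := by
    simp only [Functor.map_comp, Category.assoc]
    rw [reassoc_of% (assoc_coh_inv R p.rep q.rep u.rep V.right),
      (R.mapComp p.rep q.rep).inv.naturality_assoc u.bwd]
    rfl
  show Quot.mk (OpticRel S V) ⟨(p.rep ≫ q.rep) ≫ u.rep,
        (p.fwd ≫ (L.map p.rep).map q.fwd ≫ (L.mapComp p.rep q.rep).hom.app U.left)
          ≫ (L.map (p.rep ≫ q.rep)).map u.fwd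
          ≫ (L.mapComp (p.rep ≫ q.rep) u.rep).hom.app V.left,
        (R.mapComp (p.rep ≫ q.rep) u.rep).inv.app V.right
          ≫ (R.map (p.rep ≫ q.rep)).map u.bwd
          ≫ ((R.mapComp p.rep q.rep).inv.app U.right
            ≫ (R.map p.rep).map q.bwd ≫ p.bwd)⟩
      = Quot.mk (OpticRel S V) ⟨p.rep ≫ q.rep ≫ u.rep,
        p.fwd ≫ (L.map p.rep).map (q.fwd ≫ (L.map q.rep).map u.fwd
            ≫ (L.mapComp q.rep u.rep).hom.app V.left)
          ≫ (L.mapComp p.rep (q.rep ≫ u.rep)).hom.app V.left,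
        (R.mapComp p.rep (q.rep ≫ u.rep)).inv.app V.right
          ≫ (R.map p.rep).map ((R.mapComp q.rep u.rep).inv.app V.right
            ≫ (R.map q.rep).map u.bwd ≫ q.bwd) ≫ p.bwd⟩
  rw [← hf, ← hb]
  exact (Quot.sound (OpticRel.mk (α_ p.rep q.rep u.rep).hom _ _)).symm

end MainParts

/-- The dependent optics construction yields a category: the composition
formula is extranatural in the representatives (it descends to the coend quotient in
either argument), and, with the identities `⟨(θ_A)_X ∣ (θ'_A⁻¹)_{X'}⟩`, the induced
composition of equivalence classes is unital and associative, so that `Optic_{L,R}`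
(objects `OpticObj L R`, hom-sets `OpticHom`) is a category. -/
theorem optic_is_category {B : Type u} [Bicategory.{w, v} B] (L R : BIndexedCat.{v₂, u₂} B) :
    -- composition descends through the coend relation in the first argument
    (∀ (S T U : OpticObj L R) (p p' : OpticHomRaw S T) (q : OpticHomRaw T U),
        OpticRel S T p p' →
          Quot.mk (OpticRel S U) (rawComp p q) = Quot.mk (OpticRel S U) (rawComp p' q)) ∧
    -- composition descends through the coend relation in the second argument
    (∀ (S T U : OpticObj L R) (p : OpticHomRaw S T) (q q' : OpticHomRaw T U),
        OpticRel T U q q' →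
          Quot.mk (OpticRel S U) (rawComp p q) = Quot.mk (OpticRel S U) (rawComp p q')) ∧
    -- left unitality
    (∀ (S T : OpticObj L R) (p : OpticHomRaw S T),
        Quot.mk (OpticRel S T) (rawComp (rawId S) p) = Quot.mk (OpticRel S T) p) ∧
    -- right unitality
    (∀ (S T : OpticObj L R) (p : OpticHomRaw S T),
        Quot.mk (OpticRel S T) (rawComp p (rawId T)) = Quot.mk (OpticRel S T) p) ∧
    -- associativity
    (∀ (S T U V : OpticObj L R) (p : OpticHomRaw S T) (q : OpticHomRaw T U)
        (u : OpticHomRaw U V),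
        Quot.mk (OpticRel S V) (rawComp (rawComp p q) u)
          = Quot.mk (OpticRel S V) (rawComp p (rawComp q u))) := by
  exact ⟨comp_rel_left, comp_rel_right, id_comp', comp_id', comp_assoc'⟩

end DependentOptics
end

section
/- If C is a lextensive category, then the inclusion C ↪ Span_C preserves finite coproducts: for a finite coproduct A = ∐_{i∈I} A_i in C, the object A together with the spans induced by the coproduct inclusions is a coproduct of (A_i)_{i∈I} in the bicategory Span_C, i.e. for every object B there is an equivalence of hom-categories Span_C(A, B) = C/(A × B) ≃ ∏_{i∈I} C/(A_i × B) = ∏_{i∈I} Span_C(A_i, B). -/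
/-!
Pulling back along the injections of a finite coproduct `c.pt = ∐ Xᵢ` in an extensive category
gives an equivalence `C/c.pt ≌ ∏ C/Xᵢ`. It is fully faithful because universality makes every
`Y → c.pt` the coproduct of its pullbacks `Y ×_{c.pt} Xᵢ`, so maps out of `Y` over `c.pt` are
families of maps out of these pullbacks; it is essentially surjective because, by the van Kampen
property, a family `Yᵢ → Xᵢ` is recovered as the pullbacks of `∐ Yᵢ → ∐ Xᵢ`. The theorem is
the case of the cofan `(Xᵢ ⨯ B)ᵢ`, again a coproduct by universality, since `Xᵢ ⨯ B` is the
pullback of `c.pt ⨯ B → c.pt` along the `i`-th injection.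
-/

open CategoryTheory CategoryTheory.Limits

universe v u

namespace CategoryTheory.Limits.Cofan

variable {C : Type u} [Category.{v} C] {I : Type*} {X : I → C} {c : Cofan X}

noncomputable def isColimitPullbackFst [HasPullbacks C] [Finite I] [FinitaryPreExtensive C]
    (hc : IsColimit c) (Y : Over c.pt) :
    IsColimit (Cofan.mk Y.left fun i => pullback.fst Y.hom (c.inj i)) :=
  (FinitaryPreExtensive.isUniversal_finiteCoproducts hc _
    (Discrete.natTrans fun i => pullback.snd Y.hom (c.inj i.as)) Y.hom
    (by ext ⟨i⟩; exact pullback.condition.symm) (.of_discrete _)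
    (fun ⟨i⟩ => IsPullback.of_hasPullback Y.hom (c.inj i))).some

noncomputable def isColimitProdMap [HasBinaryProducts C] [Finite I] [FinitaryPreExtensive C]
    (hc : IsColimit c) (B : C) :
    IsColimit (Cofan.mk (c.pt ⨯ B) fun i => prod.map (c.inj i) (𝟙 B)) :=
  (FinitaryPreExtensive.isUniversal_finiteCoproducts hc _
    (Discrete.natTrans fun _ => prod.fst) prod.fst (by ext ⟨i⟩; simp [Cofan.inj])
    (.of_discrete _) (fun ⟨i⟩ => (IsPullback.of_prod_fst_with_id (c.inj i) B).flip)).some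

theorem isPullback_sigmaι_sigmaDesc [Finite I] [FinitaryExtensive C] (hc : IsColimit c)
    {Y : I → C} (g : ∀ i, Y i ⟶ X i) (i : I) :
    IsPullback (Sigma.ι Y i) (g i) (Sigma.desc fun j => g j ≫ c.inj j) (c.inj i) :=
  (FinitaryExtensive.isVanKampen_finiteCoproducts hc (Cofan.mk (∐ Y) (Sigma.ι Y))
    (Discrete.natTrans fun j => g j.as) _ (by ext ⟨j⟩; simp [Cofan.inj])
    (.of_discrete _)).mp ⟨coproductIsCoproduct Y⟩ ⟨i⟩

variable [HasPullbacks C]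

noncomputable abbrev pullbackPi (c : Cofan X) : Over c.pt ⥤ ∀ i, Over (X i) :=
  Functor.pi' fun i => Over.pullback (c.inj i)

theorem faithful_pullbackPi [Finite I] [FinitaryPreExtensive C] (hc : IsColimit c) :
    c.pullbackPi.Faithful where
  map_injective {Y Z} u v huv := by
    ext1
    refine (isColimitPullbackFst hc Y).hom_ext fun ⟨i⟩ => ?_
    have := congr(($huv i).left ≫ pullback.fst Z.hom (c.inj i))
    exact (pullback.lift_fst _ _ _).symm.trans (this.trans (pullback.lift_fst _ _ _))

theorem full_pullbackPi [Finite I] [FinitaryPreExtensive C] (hc : IsColimit c) :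
    c.pullbackPi.Full where
  map_surjective {Y Z} w := by
    -- retyped so that `pullback.condition` rewrites: `Over.pullback` builds its pullbacks
    -- from a different (defeq) `HasPullback` instance
    let wl (i : I) : pullback Y.hom (c.inj i) ⟶ pullback Z.hom (c.inj i) := (w i).left
    have hw (i : I) : wl i ≫ pullback.snd Z.hom (c.inj i) = pullback.snd Y.hom (c.inj i) :=
      Over.w (w i)
    let hY := isColimitPullbackFst hc Y
    let u : Y.left ⟶ Z.left :=
      Cofan.IsColimit.desc hY fun i => wl i ≫ pullback.fst Z.hom (c.inj i)
    have hu (i : I) : pullback.fst Y.hom (c.inj i) ≫ u = wl i ≫ pullback.fst Z.hom (c.inj i) :=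
      Cofan.IsColimit.fac hY _ i
    have hcomm : u ≫ Z.hom = Y.hom := by
      refine Cofan.IsColimit.hom_ext hY _ _ fun i => ?_
      calc pullback.fst Y.hom (c.inj i) ≫ u ≫ Z.hom
          = wl i ≫ pullback.snd Z.hom (c.inj i) ≫ c.inj i := by
            rw [reassoc_of% hu i, pullback.condition]
        _ = pullback.fst Y.hom (c.inj i) ≫ Y.hom := by
            rw [reassoc_of% hw i, pullback.condition]
    refine ⟨Over.homMk u hcomm, funext fun i => Over.OverMorphism.ext (pullback.hom_ext ?_ ?_)⟩
    · exact (pullback.lift_fst _ _ _).trans (hu i)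
    · exact (pullback.lift_snd _ _ _).trans (hw i).symm

theorem essSurj_pullbackPi [Finite I] [FinitaryExtensive C] (hc : IsColimit c) :
    c.pullbackPi.EssSurj where
  mem_essImage f :=
    have hpb := isPullback_sigmaι_sigmaDesc hc fun i => (f i).hom
    ⟨Over.mk (Sigma.desc fun i => (f i).hom ≫ c.inj i),
      ⟨Pi.isoMk fun i => Over.isoMk (hpb i).isoPullback.symm (hpb i).isoPullback_inv_snd⟩⟩

theorem isEquivalence_pullbackPi [Finite I] [FinitaryExtensive C] (hc : IsColimit c) :
    c.pullbackPi.IsEquivalence where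
  faithful := faithful_pullbackPi hc
  full := full_pullbackPi hc
  essSurj := essSurj_pullbackPi hc

end CategoryTheory.Limits.Cofan

/-- **Statement 5.** If `C` is a lextensive category (finitely complete, with finite
coproducts which are disjoint and universal), then the inclusion `C ↪ Span_C` preserves
finite coproducts: for a finite coproduct `A = ∐ᵢ Aᵢ` in `C` and every object `B`, the
functor `Span_C(A, B) = C/(A × B) ⥤ ∏ᵢ C/(Aᵢ × B) = ∏ᵢ Span_C(Aᵢ, B)`, given by pulling
back along the spans induced by the coproduct inclusions (i.e. along `ιᵢ × 𝟙 B`), is an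
equivalence of hom-categories. -/
theorem span_inclusion_preserves_coproducts
    {C : Type u} [Category.{v} C] [HasFiniteLimits C] [FinitaryExtensive C]
    {I : Type} [Finite I] (A : I → C) (c : Cofan A) (hc : IsColimit c) (B : C) :
    (Functor.pi' fun i =>
        Over.pullback (prod.map (c.inj i) (𝟙 B)) :
      Over (Limits.prod c.pt B) ⥤ ∀ i, Over (Limits.prod (A i) B)).IsEquivalence :=
  Cofan.isEquivalence_pullbackPi (Cofan.isColimitProdMap hc B)
end
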